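/- arXiv:1706.00600 — 3 statements merged into one kernel-verified Lean document; each statement's English description precedes it below -/
import Mathlib

section
/- Let V be a complex Hilbert space, let a : V × V → ℂ be a bounded sesquilinear form with |a(u,v)| ≤ M ‖u‖ ‖v‖ for all u, v ∈ V, and let W ⊆ V be a nonzero closed subspace on which a is coercive after rotation: there exist θ ∈ ℝ and α > 0 with Re( e^{iθ} a(w,w) ) ≥ α ‖w‖² for all w ∈ W. Let u ∈ V and u_h ∈ W satisfy the Galerkin orthogonality a(u − u_h, w) = 0 for all w ∈ W. Then ‖u − u_h‖ ≤ (M/α) inf_{w ∈ W} ‖u − w‖. -/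
/-!
Write `z = u - u_h` and, for `w ∈ W`, `y = u_h - w ∈ W`, so that `u - w = y + z`. Since
`a(z, y) = 0`, coercivity and boundedness give `α ‖y‖² ≤ Re (e^{iθ} a(y + t z, y)) ≤ M ‖y + t z‖ ‖y‖`
for every scalar `t`, i.e. `dist(y, ℂ z) ≥ (α / M) ‖y‖`: the sine of the angle between `y` and `z`
is at least `α / M`. The sine is symmetric in `y` and `z`, because
`‖z‖² dist(y, ℂ z)² = ‖y‖² ‖z‖² - |⟪z, y⟫|²` is, so also `‖u - w‖ = ‖y + z‖ ≥ dist(z, ℂ y) ≥ (α / M) ‖z‖`.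
-/

open scoped InnerProductSpace
open RCLike

section InnerProductSpace

variable {𝕜 E : Type*} [RCLike 𝕜] [NormedAddCommGroup E] [InnerProductSpace 𝕜 E]

theorem norm_sq_mul_norm_add_smul_sq (y z : E) (t : 𝕜) :
    ‖z‖ ^ 2 * ‖y + t • z‖ ^ 2 =
      ‖y‖ ^ 2 * ‖z‖ ^ 2 - ‖⟪z, y⟫_𝕜‖ ^ 2 + ‖⟪z, y⟫_𝕜 + t * (‖z‖ ^ 2 : ℝ)‖ ^ 2 := by
  rw [norm_add_sq (𝕜 := 𝕜), norm_add_sq (𝕜 := 𝕜), inner_smul_right, norm_smul, norm_mul,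
    RCLike.norm_ofReal, abs_of_nonneg (by positivity), ← inner_conj_symm, RCLike.inner_apply,
    mul_right_comm, RCLike.re_mul_ofReal, mul_comm t]
  ring

theorem exists_norm_sq_mul_norm_add_smul_sq_eq {z : E} (hz : z ≠ 0) (y : E) :
    ∃ t : 𝕜, ‖z‖ ^ 2 * ‖y + t • z‖ ^ 2 = ‖y‖ ^ 2 * ‖z‖ ^ 2 - ‖⟪z, y⟫_𝕜‖ ^ 2 := by
  refine ⟨-⟪z, y⟫_𝕜 / (‖z‖ ^ 2 : ℝ), ?_⟩
  have hz2 : ((‖z‖ ^ 2 : ℝ) : 𝕜) ≠ 0 := by exact_mod_cast (pow_pos (norm_pos_iff.mpr hz) 2).ne'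
  rw [norm_sq_mul_norm_add_smul_sq, div_mul_cancel₀ _ hz2, add_neg_cancel, norm_zero]
  ring

theorem mul_norm_le_mul_norm_add_of_forall_smul {y z : E} {α M : ℝ} (hα : 0 ≤ α) (hαM : α ≤ M)
    (h : ∀ t : 𝕜, α * ‖y‖ ≤ M * ‖y + t • z‖) : α * ‖z‖ ≤ M * ‖y + z‖ := by
  rcases eq_or_ne z 0 with rfl | hz
  · simpa using mul_nonneg (hα.trans hαM) (norm_nonneg y)
  rcases eq_or_ne y 0 with rfl | hy
  · simpa using mul_le_mul_of_nonneg_right hαM (norm_nonneg z)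
  obtain ⟨t, ht⟩ := exists_norm_sq_mul_norm_add_smul_sq_eq (𝕜 := 𝕜) hz y
  have hgram_lower :
      α ^ 2 * (‖y‖ ^ 2 * ‖z‖ ^ 2) ≤ M ^ 2 * (‖y‖ ^ 2 * ‖z‖ ^ 2 - ‖⟪z, y⟫_𝕜‖ ^ 2) := by
    have h2 : (α * ‖y‖) ^ 2 ≤ (M * ‖y + t • z‖) ^ 2 := pow_le_pow_left₀ (by positivity) (h t) 2
    rw [← ht]
    nlinarith [mul_le_mul_of_nonneg_right h2 (sq_nonneg ‖z‖)]
  have hgram_upper : ‖y‖ ^ 2 * ‖z‖ ^ 2 - ‖⟪z, y⟫_𝕜‖ ^ 2 ≤ ‖y‖ ^ 2 * ‖y + z‖ ^ 2 := by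
    have := norm_sq_mul_norm_add_smul_sq (𝕜 := 𝕜) z y 1
    rw [one_smul, add_comm z y, norm_inner_symm] at this
    nlinarith [sq_nonneg ‖⟪y, z⟫_𝕜 + 1 * (‖y‖ ^ 2 : ℝ)‖]
  have hy2 : 0 < ‖y‖ ^ 2 := by positivity
  have hsq : (α * ‖z‖) ^ 2 ≤ (M * ‖y + z‖) ^ 2 := by
    refine le_of_mul_le_mul_left ?_ hy2
    nlinarith
  exact (pow_le_pow_iff_left₀ (by positivity) (mul_nonneg (hα.trans hαM) (norm_nonneg _))
    two_ne_zero).mp hsq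

end InnerProductSpace

section SesquilinearForm

variable {𝕜 E : Type*} [RCLike 𝕜] [NormedAddCommGroup E] {a : E → E → 𝕜} {M α : ℝ} {ω : 𝕜}

theorem re_mul_le_norm_of_norm_le_one (hω : ‖ω‖ ≤ 1) (x : 𝕜) : re (ω * x) ≤ ‖x‖ :=
  (re_le_norm _).trans (by rw [norm_mul]; exact mul_le_of_le_one_left (norm_nonneg x) hω)

theorem le_of_coercive_of_bounded (hbound : ∀ u v : E, ‖a u v‖ ≤ M * ‖u‖ * ‖v‖)
    (hω : ‖ω‖ ≤ 1) {w : E} (hw : w ≠ 0) (hcoer : α * ‖w‖ ^ 2 ≤ re (ω * a w w)) : α ≤ M := by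
  have hw2 : 0 < ‖w‖ ^ 2 := by positivity
  refine le_of_mul_le_mul_right ?_ hw2
  calc α * ‖w‖ ^ 2 ≤ ‖a w w‖ := hcoer.trans (re_mul_le_norm_of_norm_le_one hω _)
    _ ≤ M * ‖w‖ ^ 2 := by rw [sq, ← mul_assoc]; exact hbound w w

theorem mul_norm_le_mul_norm_add_smul_of_coercive [Module 𝕜 E]
    (ha_add : ∀ u u' v : E, a (u + u') v = a u v + a u' v)
    (ha_smul : ∀ (c : 𝕜) (u v : E), a (c • u) v = c * a u v)
    (hbound : ∀ u v : E, ‖a u v‖ ≤ M * ‖u‖ * ‖v‖) (hM : 0 ≤ M) (hω : ‖ω‖ ≤ 1)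
    {y z : E} (hcoer : α * ‖y‖ ^ 2 ≤ re (ω * a y y)) (horth : a z y = 0) (t : 𝕜) :
    α * ‖y‖ ≤ M * ‖y + t • z‖ := by
  rcases eq_or_ne y 0 with rfl | hy
  · simpa using mul_nonneg hM (norm_nonneg (t • z))
  have hfirst : a (y + t • z) y = a y y := by rw [ha_add, ha_smul, horth, mul_zero, add_zero]
  refine le_of_mul_le_mul_right ?_ (norm_pos_iff.mpr hy)
  calc α * ‖y‖ * ‖y‖ = α * ‖y‖ ^ 2 := by ring
    _ ≤ re (ω * a (y + t • z) y) := hfirst ▸ hcoer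
    _ ≤ ‖a (y + t • z) y‖ := re_mul_le_norm_of_norm_le_one hω _
    _ ≤ M * ‖y + t • z‖ * ‖y‖ := hbound _ _

end SesquilinearForm

theorem xu_zikatanov_quasi_optimality_general
    {V : Type*} [NormedAddCommGroup V] [InnerProductSpace ℂ V]
    (a : V → V → ℂ) (M : ℝ)
    (ha_add1 : ∀ u u' v : V, a (u + u') v = a u v + a u' v)
    (ha_smul1 : ∀ (c : ℂ) (u v : V), a (c • u) v = c * a u v)
    (hbound : ∀ u v : V, ‖a u v‖ ≤ M * ‖u‖ * ‖v‖)
    (W : Submodule ℂ V) (hWne : W ≠ ⊥)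
    (θ α : ℝ) (hα : 0 < α)
    (hcoer : ∀ w ∈ W, α * ‖w‖ ^ 2 ≤ (Complex.exp (θ * Complex.I) * a w w).re)
    (u uh : V) (huh : uh ∈ W)
    (hGal : ∀ w ∈ W, a (u - uh) w = 0) :
    ‖u - uh‖ ≤ (M / α) * ⨅ w : W, ‖u - (w : V)‖ := by
  have hω : ‖Complex.exp (θ * Complex.I)‖ ≤ 1 := (Complex.norm_exp_ofReal_mul_I θ).le
  obtain ⟨w₀, hw₀W, hw₀⟩ := Submodule.exists_mem_ne_zero_of_ne_bot hWne
  have hαM : α ≤ M := le_of_coercive_of_bounded hbound hω hw₀ (hcoer w₀ hw₀W)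
  have hquasi : ∀ w : W, α * ‖u - uh‖ ≤ M * ‖u - w‖ := fun w => by
    have hy : uh - w ∈ W := W.sub_mem huh w.2
    simpa only [sub_add_sub_cancel'] using mul_norm_le_mul_norm_add_of_forall_smul hα.le hαM
      (mul_norm_le_mul_norm_add_smul_of_coercive ha_add1 ha_smul1 hbound (hα.le.trans hαM) hω
        (hcoer _ hy) (hGal _ hy))
  rw [Real.mul_iInf_of_nonneg (div_nonneg (hα.le.trans hαM) hα.le)]
  refine le_ciInf fun w => ?_
  rw [div_mul_eq_mul_div, le_div_iff₀ hα]
  linarith [hquasi w]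

/-- **Xu–Zikatanov quasi-optimality estimate** (abstract error estimate used in
Theorems 3.2 and 4.7 of Ern–Guermond). If the bounded sesquilinear form `a` is coercive
after rotation on a nonzero closed subspace `W` of a complex Hilbert space `V`, and
`u ∈ V`, `u_h ∈ W` satisfy the Galerkin orthogonality `a(u - u_h, w) = 0` for all `w ∈ W`,
then `‖u - u_h‖ ≤ (M/α) inf_{w ∈ W} ‖u - w‖`. -/
theorem xu_zikatanov_quasi_optimality
    {V : Type*} [NormedAddCommGroup V] [InnerProductSpace ℂ V] [CompleteSpace V]
    (a : V → V → ℂ) (M : ℝ)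
    (ha_add1 : ∀ u u' v : V, a (u + u') v = a u v + a u' v)
    (ha_smul1 : ∀ (c : ℂ) (u v : V), a (c • u) v = c * a u v)
    (ha_add2 : ∀ u v v' : V, a u (v + v') = a u v + a u v')
    (ha_smul2 : ∀ (c : ℂ) (u v : V), a u (c • v) = (starRingEnd ℂ) c * a u v)
    (hbound : ∀ u v : V, ‖a u v‖ ≤ M * ‖u‖ * ‖v‖)
    (W : Submodule ℂ V) (hWclosed : IsClosed (W : Set V)) (hWne : W ≠ ⊥)
    (θ α : ℝ) (hα : 0 < α)
    (hcoer : ∀ w ∈ W, α * ‖w‖ ^ 2 ≤ (Complex.exp (θ * Complex.I) * a w w).re)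
    (u uh : V) (huh : uh ∈ W)
    (hGal : ∀ w ∈ W, a (u - uh) w = 0) :
    ‖u - uh‖ ≤ (M / α) * ⨅ w : W, ‖u - (w : V)‖ :=
  xu_zikatanov_quasi_optimality_general a M ha_add1 ha_smul1 hbound W hWne θ α hα hcoer u uh huh
    hGal
end

section
/- Let V and L be complex Hilbert spaces and let ι : V → L be an injective bounded linear map with dense range (a continuous embedding). Let a : V × V → ℂ be a bounded sesquilinear form that is coercive: Re a(v,v) ≥ α ‖v‖²_V for all v ∈ V with α > 0. Let (V_n)_{n∈ℕ} be a sequence of finite-dimensional subspaces of V such that dist_V(v, V_n) → 0 as n → ∞ for every v ∈ V, and for each n let G_n : V → V_n be the Galerkin projection, i.e., the (well-defined) map such that a(G_n(v) − v, w) = 0 for all w ∈ V_n. Then lim_{n→∞} sup_{v ∈ V \ V_n} ‖ι(G_n(v) − v)‖_L / ‖G_n(v) − v‖_V = 0 if and only if ι is a compact operator. -/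
/-!
Write `P_n` for the Galerkin projections and `S_n` for the suprema in the statement. Céa's estimate
`‖P_n v - v‖ ≤ (‖a‖ / α) ‖v‖` gives `‖ι - ι ∘ P_n‖ ≤ (‖a‖ / α) S_n`, so if `S_n → 0` then `ι` is a
norm limit of finite-rank operators, hence compact.

Conversely, let `Z` solve the dual problem `a(x, Z y) = ⟪y, ι x⟫` (Lax–Milgram). For a Galerkin
error `e`, orthogonality to `V_n` gives `‖ι e‖² = a(e, Z ι e - w) ≤ ‖a‖ ‖e‖ ‖Z ι e - w‖` for every
`w ∈ V_n`. If `ι` is compact, `Z ι` maps the unit ball to a totally bounded set, on which the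
`1`-Lipschitz functions `dist(·, V_n)` tend to zero uniformly; hence `S_n → 0`.
-/

open Filter Topology Metric RCLike
open scoped InnerProductSpace

section FiniteRank

variable {𝕜 E F : Type*} [NontriviallyNormedField 𝕜] [CompleteSpace 𝕜] [LocallyCompactSpace 𝕜]
  [NormedAddCommGroup E] [NormedSpace 𝕜 E] [NormedAddCommGroup F] [NormedSpace 𝕜 F]

theorem ContinuousLinearMap.isCompactOperator_of_forall_mem_finiteDimensional (f : E →L[𝕜] F)
    {W : Submodule 𝕜 F} [FiniteDimensional 𝕜 W] (h : ∀ x, f x ∈ W) : IsCompactOperator f :=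
  ((isCompactOperator_id_iff_finiteDimensional (E := W).2 ‹_›).comp_clm
    (f.codRestrict W h)).clm_comp W.subtypeL

end FiniteRank

theorem TotallyBounded.eventually_forall_infDist_lt {X ι : Type*} [PseudoMetricSpace X]
    {K : Set X} (hK : TotallyBounded K) {l : Filter ι} {s : ι → Set X}
    (h : ∀ x, Tendsto (fun i => infDist x (s i)) l (𝓝 0)) {ε : ℝ} (hε : 0 < ε) :
    ∀ᶠ i in l, ∀ x ∈ K, infDist x (s i) < ε := by
  obtain ⟨t, htfin, hcover⟩ := Metric.totallyBounded_iff.1 hK (ε / 2) (half_pos hε)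
  have hnet : ∀ᶠ i in l, ∀ y ∈ t, infDist y (s i) < ε / 2 :=
    (eventually_all_finite htfin).2 fun y _ => (h y).eventually (gt_mem_nhds (half_pos hε))
  filter_upwards [hnet] with i hi x hx
  obtain ⟨y, hyt, hxy⟩ := Set.mem_iUnion₂.1 (hcover hx)
  calc infDist x (s i) ≤ infDist y (s i) + dist x y := infDist_le_infDist_add_dist
    _ < ε / 2 + ε / 2 := add_lt_add (hi y hyt) hxy
    _ = ε := add_halves ε

section CoerciveForm

variable {𝕜 V : Type*} [RCLike 𝕜] [NormedAddCommGroup V] [NormedSpace 𝕜 V]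
  {a : V →L[𝕜] V →L⋆[𝕜] 𝕜} {α : ℝ}

structure IsCoerciveWith (a : V →L[𝕜] V →L⋆[𝕜] 𝕜) (α : ℝ) : Prop where
  pos : 0 < α
  le_re : ∀ v, α * ‖v‖ ^ 2 ≤ re (a v v)

theorem IsCoerciveWith.eq_zero (ha : IsCoerciveWith a α) {v : V} (hv : a v v = 0) : v = 0 := by
  by_contra hne
  have h := ha.le_re v
  rw [hv, map_zero] at h
  linarith [mul_pos ha.pos (pow_pos (norm_pos_iff.2 hne) 2)]

structure IsGalerkinProjection (a : V →L[𝕜] V →L⋆[𝕜] 𝕜) (W : Submodule 𝕜 V) (P : V → V) :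
    Prop where
  mem : ∀ v, P v ∈ W
  orthogonal : ∀ v, ∀ w ∈ W, a (P v - v) w = 0

namespace IsGalerkinProjection

variable {W : Submodule 𝕜 V} {P : V → V}

theorem eq_of_orthogonal (hP : IsGalerkinProjection a W P) (ha : IsCoerciveWith a α) {v x : V}
    (hx : x ∈ W)    (hxv : ∀ w ∈ W, a (x - v) w = 0) : P v = x := by
  have hd : P v - x ∈ W := sub_mem (hP.mem v) hx
  refine sub_eq_zero.1 (ha.eq_zero ?_)
  have hsplit : a (P v - x) = a (P v - v) - a (x - v) := by
    rw [← map_sub, sub_sub_sub_cancel_right]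
  rw [hsplit, sub_apply, hP.orthogonal v _ hd, hxv _ hd, sub_zero]

theorem apply_of_mem (hP : IsGalerkinProjection a W P) (ha : IsCoerciveWith a α) {v : V}
    (hv : v ∈ W) : P v = v :=
  hP.eq_of_orthogonal ha hv fun w _ => by simp

theorem map_add (hP : IsGalerkinProjection a W P) (ha : IsCoerciveWith a α) (u v : V) :
    P (u + v) = P u + P v :=
  hP.eq_of_orthogonal ha (add_mem (hP.mem u) (hP.mem v)) fun w hw => by
    rw [add_sub_add_comm, _root_.map_add, add_apply, hP.orthogonal u w hw,
      hP.orthogonal v w hw, add_zero]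

theorem map_smul (hP : IsGalerkinProjection a W P) (ha : IsCoerciveWith a α) (c : 𝕜) (v : V) :
    P (c • v) = c • P v :=
  hP.eq_of_orthogonal ha (W.smul_mem c (hP.mem v)) fun w hw => by
    rw [← smul_sub, _root_.map_smul, smul_apply, hP.orthogonal v w hw, smul_zero]

theorem norm_sub_le (hP : IsGalerkinProjection a W P) (ha : IsCoerciveWith a α) (v : V) :
    ‖P v - v‖ ≤ ‖a‖ / α * ‖v‖ := by
  set e := P v - v
  have hee : a e e = -a e v := by
    rw [map_sub, hP.orthogonal v _ (hP.mem v), zero_sub]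
  have key : α * ‖e‖ ^ 2 ≤ ‖a‖ * ‖v‖ * ‖e‖ := calc
    α * ‖e‖ ^ 2 ≤ re (a e e) := ha.le_re e
    _ ≤ ‖a e v‖ := by rw [hee, ← norm_neg (a e v)]; exact re_le_norm _
    _ ≤ ‖a‖ * ‖e‖ * ‖v‖ := a.le_opNorm₂ e v
    _ = ‖a‖ * ‖v‖ * ‖e‖ := by ring
  rcases (norm_nonneg e).eq_or_lt with he | he
  · rw [← he]; exact mul_nonneg (div_nonneg a.opNorm_nonneg ha.pos.le) (norm_nonneg _)
  · rw [div_mul_eq_mul_div, le_div_iff₀ ha.pos]; nlinarith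

noncomputable def toContinuousLinearMap (hP : IsGalerkinProjection a W P)
    (ha : IsCoerciveWith a α) : V →L[𝕜] V :=
  LinearMap.mkContinuous
    { toFun := P, map_add' := hP.map_add ha, map_smul' := hP.map_smul ha }
    (1 + ‖a‖ / α) fun v => calc
      ‖P v‖ ≤ ‖P v - v‖ + ‖v‖ := norm_le_norm_sub_add _ _
      _ ≤ ‖a‖ / α * ‖v‖ + ‖v‖ := by gcongr; exact hP.norm_sub_le ha v
      _ = (1 + ‖a‖ / α) * ‖v‖ := by ring

@[simp]
theorem toContinuousLinearMap_apply (hP : IsGalerkinProjection a W P) (ha : IsCoerciveWith a α)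
    (v : V) : hP.toContinuousLinearMap ha v = P v :=
  rfl

end IsGalerkinProjection

end CoerciveForm

section ErrorRatio

variable {𝕜 V L : Type*} [RCLike 𝕜] [NormedAddCommGroup V] [NormedSpace 𝕜 V]
  [NormedAddCommGroup L] [NormedSpace 𝕜 L]

noncomputable def galerkinErrorRatio (ι : V →L[𝕜] L) (W : Submodule 𝕜 V) (P : V → V) : ℝ :=
  ⨆ v : {v : V // v ∉ W}, ‖ι (P v - v)‖ / ‖P v - v‖

variable {ι : V →L[𝕜] L} {W : Submodule 𝕜 V} {P : V → V}

theorem galerkinErrorRatio_nonneg : 0 ≤ galerkinErrorRatio ι W P :=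
  Real.iSup_nonneg fun _ => by positivity

theorem galerkinErrorRatio_le {c : ℝ} (hc : 0 ≤ c)
    (h : ∀ v ∉ W, ‖ι (P v - v)‖ ≤ c * ‖P v - v‖) : galerkinErrorRatio ι W P ≤ c :=
  Real.iSup_le (fun v => div_le_of_le_mul₀ (norm_nonneg _) hc (h v v.2)) hc

theorem IsGalerkinProjection.norm_apply_sub_le {a : V →L[𝕜] V →L⋆[𝕜] 𝕜} {α : ℝ}
    (hP : IsGalerkinProjection a W P) (ha : IsCoerciveWith a α)
    (v : V) : ‖ι (P v - v)‖ ≤ galerkinErrorRatio ι W P * ‖P v - v‖ := by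
  by_cases hv : v ∈ W
  · simp [hP.apply_of_mem ha hv]
  have hne : P v - v ≠ 0 := fun h => hv (sub_eq_zero.1 h ▸ hP.mem v)
  rw [← div_le_iff₀ (norm_pos_iff.2 hne)]
  refine le_ciSup (f := fun v : {v : V // v ∉ W} => ‖ι (P v - v)‖ / ‖P v - v‖) ⟨‖ι‖, ?_⟩ ⟨v, hv⟩
  rintro _ ⟨u, rfl⟩
  exact div_le_of_le_mul₀ (norm_nonneg _) (norm_nonneg _) (ι.le_opNorm _)

theorem isCompactOperator_of_tendsto_galerkinErrorRatio [CompleteSpace L]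
    {a : V →L[𝕜] V →L⋆[𝕜] 𝕜} {α : ℝ} (ha : IsCoerciveWith a α)
    {W : ℕ → Submodule 𝕜 V} (hfin : ∀ n, FiniteDimensional 𝕜 (W n)) {P : ℕ → V → V}
    (hP : ∀ n, IsGalerkinProjection a (W n) (P n))
    (h : Tendsto (fun n => galerkinErrorRatio ι (W n) (P n)) atTop (𝓝 0)) :
    IsCompactOperator ι := by
  refine isCompactOperator_of_tendsto (l := atTop)
    (F := fun n => ι ∘L (hP n).toContinuousLinearMap ha) ?_ (.of_forall fun n => ?_)
  · rw [tendsto_iff_norm_sub_tendsto_zero]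
    refine squeeze_zero (fun n => norm_nonneg _) (fun n => ?_)
      (by simpa using h.const_mul (‖a‖ / α))
    refine ContinuousLinearMap.opNorm_le_bound _
      (mul_nonneg (div_nonneg a.opNorm_nonneg ha.pos.le) galerkinErrorRatio_nonneg) fun v => ?_
    calc ‖(ι ∘L (hP n).toContinuousLinearMap ha - ι) v‖ = ‖ι (P n v - v)‖ := by simp
      _ ≤ galerkinErrorRatio ι (W n) (P n) * ‖P n v - v‖ := (hP n).norm_apply_sub_le ha v
      _ ≤ galerkinErrorRatio ι (W n) (P n) * (‖a‖ / α * ‖v‖) := by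
        gcongr
        exacts [galerkinErrorRatio_nonneg, (hP n).norm_sub_le ha v]
      _ = ‖a‖ / α * galerkinErrorRatio ι (W n) (P n) * ‖v‖ := by ring
  · have := hfin n
    exact (ι ∘L _).isCompactOperator_of_forall_mem_finiteDimensional
      (W := (W n).map (ι : V →ₗ[𝕜] L))
      fun v => Submodule.mem_map_of_mem (f := (ι : V →ₗ[𝕜] L)) ((hP n).mem v)

end ErrorRatio

section LaxMilgram

open InnerProductSpace

variable {𝕜 V : Type*} [RCLike 𝕜] [NormedAddCommGroup V] [InnerProductSpace 𝕜 V] [CompleteSpace V]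
  {a : V →L[𝕜] V →L⋆[𝕜] 𝕜} {α : ℝ}

-- The Riesz representation `continuousLinearMapOfBilin` wants a form that is conjugate-linear in
-- its first argument, whereas `a` is conjugate-linear in its second; hence `a.flip`.

theorem mul_norm_le_norm_continuousLinearMapOfBilin_flip (ha : IsCoerciveWith a α)
    (z : V) : α * ‖z‖ ≤ ‖continuousLinearMapOfBilin a.flip z‖ := by
  rcases (norm_nonneg z).eq_or_lt with hz | hz
  · rw [← hz, mul_zero]; exact norm_nonneg _
  refine le_of_mul_le_mul_right ?_ hz
  calc α * ‖z‖ * ‖z‖ = α * ‖z‖ ^ 2 := by ring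
    _ ≤ re (a z z) := ha.le_re z
    _ = re ⟪continuousLinearMapOfBilin a.flip z, z⟫_𝕜 := by
      rw [continuousLinearMapOfBilin_apply, ContinuousLinearMap.flip_apply]
    _ ≤ ‖continuousLinearMapOfBilin a.flip z‖ * ‖z‖ := (re_le_norm _).trans (norm_inner_le_norm _ _)

theorem antilipschitz_continuousLinearMapOfBilin_flip (ha : IsCoerciveWith a α) :
    AntilipschitzWith ⟨α⁻¹, (inv_pos.2 ha.pos).le⟩ (continuousLinearMapOfBilin a.flip) :=
  ContinuousLinearMap.antilipschitz_of_bound _ fun z => by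
    change ‖z‖ ≤ α⁻¹ * _
    rw [← div_eq_inv_mul, le_div_iff₀ ha.pos, mul_comm]
    exact mul_norm_le_norm_continuousLinearMapOfBilin_flip ha z

theorem range_continuousLinearMapOfBilin_flip_eq_top (ha : IsCoerciveWith a α) :
    (continuousLinearMapOfBilin a.flip).range = ⊤ := by
  have : CompleteSpace (continuousLinearMapOfBilin a.flip).range :=
    ((antilipschitz_continuousLinearMapOfBilin_flip ha).isClosed_range
      (ContinuousLinearMap.uniformContinuous _)).completeSpace_coe
  rw [← Submodule.orthogonal_eq_bot_iff, Submodule.eq_bot_iff]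
  intro r hr
  refine ha.eq_zero ?_
  rw [← ContinuousLinearMap.flip_apply, ← continuousLinearMapOfBilin_apply]
  exact (Submodule.mem_orthogonal _ _).1 hr _ ⟨r, rfl⟩

noncomputable def laxMilgramEquiv (ha : IsCoerciveWith a α) : V ≃L[𝕜] V :=
  .ofBijective (continuousLinearMapOfBilin a.flip)
    (LinearMap.ker_eq_bot.2 (antilipschitz_continuousLinearMapOfBilin_flip ha).injective)
    (range_continuousLinearMapOfBilin_flip_eq_top ha)

theorem inner_laxMilgramEquiv_apply (ha : IsCoerciveWith a α) (z x : V) :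
    ⟪laxMilgramEquiv ha z, x⟫_𝕜 = a x z :=
  continuousLinearMapOfBilin_apply _ z x

end LaxMilgram

section Duality

variable {𝕜 V L : Type*} [RCLike 𝕜] [NormedAddCommGroup V] [InnerProductSpace 𝕜 V]
  [CompleteSpace V] [NormedAddCommGroup L] [InnerProductSpace 𝕜 L] [CompleteSpace L]
  {a : V →L[𝕜] V →L⋆[𝕜] 𝕜} {α : ℝ}

noncomputable def dualSolution (ha : IsCoerciveWith a α) (ι : V →L[𝕜] L) : L →L[𝕜] V :=
  (laxMilgramEquiv ha).symm ∘L ι.adjoint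

variable (ha : IsCoerciveWith a α) {ι : V →L[𝕜] L}

theorem apply_dualSolution (x : V) (y : L) : a x (dualSolution ha ι y) = ⟪y, ι x⟫_𝕜 := by
  rw [← inner_laxMilgramEquiv_apply ha, dualSolution, ContinuousLinearMap.comp_apply,
    ContinuousLinearEquiv.coe_coe, ContinuousLinearEquiv.apply_symm_apply,
    ContinuousLinearMap.adjoint_inner_left]

theorem norm_sq_le_of_orthogonal {W : Submodule 𝕜 V} {e : V} (he : ∀ w ∈ W, a e w = 0)
    {w : V} (hw : w ∈ W) :
    ‖ι e‖ ^ 2 ≤ ‖a‖ * ‖e‖ * ‖dualSolution ha ι (ι e) - w‖ := calc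
  ‖ι e‖ ^ 2 = re ⟪ι e, ι e⟫_𝕜 := (inner_self_eq_norm_sq _).symm
  _ = re (a e (dualSolution ha ι (ι e) - w)) := by
    rw [map_sub, he w hw, sub_zero, apply_dualSolution]
  _ ≤ ‖a‖ * ‖e‖ * ‖dualSolution ha ι (ι e) - w‖ :=
    (re_le_norm _).trans (a.le_opNorm₂ _ _)

theorem norm_le_of_orthogonal {W : Submodule 𝕜 V} {η ε : ℝ} (hε : 0 ≤ ε) (hηε : ‖a‖ * η ≤ ε ^ 2)
    (hZ : ∀ u ∈ closedBall (0 : V) 1, infDist (dualSolution ha ι (ι u)) W < η)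
    {e : V} (he : ∀ w ∈ W, a e w = 0) : ‖ι e‖ ≤ ε * ‖e‖ := by
  rcases eq_or_ne e 0 with rfl | hne
  · simp
  set x : V := (‖e‖⁻¹ : 𝕜) • e
  have hx : ‖x‖ = 1 := norm_smul_inv_norm hne
  have hxW : ∀ w ∈ W, a x w = 0 := fun w hw => by
    rw [map_smul, smul_apply, he w hw, smul_zero]
  obtain ⟨w, hw, hdist⟩ := (infDist_lt_iff ⟨0, W.zero_mem⟩).1 (hZ x (by simp [hx]))
  have hιx : ‖ι x‖ ≤ ε := by
    refine (pow_le_pow_iff_left₀ (norm_nonneg _) hε two_ne_zero).1 ?_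
    calc ‖ι x‖ ^ 2 ≤ ‖a‖ * ‖x‖ * ‖dualSolution ha ι (ι x) - w‖ :=
          norm_sq_le_of_orthogonal ha hxW hw
      _ ≤ ‖a‖ * η := by rw [hx, mul_one, ← dist_eq_norm]; gcongr
      _ ≤ ε ^ 2 := hηε
  have hιe : ‖ι e‖ = ‖e‖ * ‖ι x‖ := by
    rw [map_smul, norm_smul, norm_inv, norm_algebraMap', norm_norm,
      mul_inv_cancel_left₀ (norm_ne_zero_iff.2 hne)]
  rw [hιe, mul_comm ε]
  gcongr

end Duality

theorem tendsto_galerkinErrorRatio_of_isCompactOperator {𝕜 V L : Type*} [RCLike 𝕜]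
    [NormedAddCommGroup V] [InnerProductSpace 𝕜 V] [CompleteSpace V]
    [NormedAddCommGroup L] [InnerProductSpace 𝕜 L] [CompleteSpace L]
    {a : V →L[𝕜] V →L⋆[𝕜] 𝕜} {α : ℝ} (ha : IsCoerciveWith a α)
    {ι : V →L[𝕜] L} {W : ℕ → Submodule 𝕜 V} {P : ℕ → V → V}
    (hP : ∀ n, IsGalerkinProjection a (W n) (P n))
    (happrox : ∀ v, Tendsto (fun n => infDist v (W n : Set V)) atTop (𝓝 0))
    (hι : IsCompactOperator ι) :
    Tendsto (fun n => galerkinErrorRatio ι (W n) (P n)) atTop (𝓝 0) := by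
  set Zι : V →L[𝕜] V := dualSolution ha ι ∘L ι
  have hZι : IsCompactOperator Zι := hι.clm_comp (dualSolution ha ι)
  have hK : TotallyBounded (Zι '' closedBall 0 1) :=
    (hZι.isCompact_closure_image_closedBall (f := (Zι : V →ₗ[𝕜] V)) 1).totallyBounded.subset
      subset_closure
  refine tendsto_order.2 ⟨fun c hc => .of_forall fun n => hc.trans_le galerkinErrorRatio_nonneg,
    fun ε hε => ?_⟩
  set η := (ε / 2) ^ 2 / (‖a‖ + 1)
  have hηε : ‖a‖ * η ≤ (ε / 2) ^ 2 := by
    rw [mul_div_left_comm]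
    exact mul_le_of_le_one_right (by positivity) ((div_le_one (by positivity)).2 (by linarith))
  filter_upwards [hK.eventually_forall_infDist_lt happrox (by positivity : 0 < η)] with n hn
  have hZ : ∀ u ∈ closedBall (0 : V) 1, infDist (dualSolution ha ι (ι u)) (W n) < η :=
    fun u hu => hn _ ⟨u, hu, rfl⟩
  refine lt_of_le_of_lt ?_ (half_lt_self hε)
  exact galerkinErrorRatio_le (half_pos hε).le fun v _ =>
    norm_le_of_orthogonal ha (half_pos hε).le hηε hZ ((hP n).orthogonal v)

theorem aubin_nitsche_iff_compact_general
    {V L : Type*} [NormedAddCommGroup V] [InnerProductSpace ℂ V] [CompleteSpace V]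
    [NormedAddCommGroup L] [InnerProductSpace ℂ L] [CompleteSpace L]
    (ι : V →L[ℂ] L)
    (a : V → V → ℂ) (M : ℝ)
    (ha_add1 : ∀ u u' v : V, a (u + u') v = a u v + a u' v)
    (ha_smul1 : ∀ (c : ℂ) (u v : V), a (c • u) v = c * a u v)
    (ha_add2 : ∀ u v v' : V, a u (v + v') = a u v + a u v')
    (ha_smul2 : ∀ (c : ℂ) (u v : V), a u (c • v) = (starRingEnd ℂ) c * a u v)
    (hbound : ∀ u v : V, ‖a u v‖ ≤ M * ‖u‖ * ‖v‖)
    (α : ℝ) (hα : 0 < α)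
    (hcoer : ∀ v : V, α * ‖v‖ ^ 2 ≤ (a v v).re)
    (Vn : ℕ → Submodule ℂ V) (hfin : ∀ n, FiniteDimensional ℂ (Vn n))
    (happrox : ∀ v : V, Tendsto (fun n => ⨅ w : Vn n, ‖v - (w : V)‖) atTop (nhds 0))
    (G : ℕ → V → V)
    (hGmem : ∀ n (v : V), G n v ∈ Vn n)
    (hGal : ∀ n (v : V), ∀ w ∈ Vn n, a (G n v - v) w = 0) :
    Tendsto
        (fun n => ⨆ v : {v : V // v ∉ Vn n}, ‖ι (G n (v : V) - (v : V))‖ / ‖G n (v : V) - (v : V)‖)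
        atTop (nhds 0) ↔
      IsCompactOperator (⇑ι) := by
  let A : V →L[ℂ] V →L⋆[ℂ] ℂ :=
    (LinearMap.mk₂'ₛₗ _ _ a ha_add1 ha_smul1 ha_add2 ha_smul2).mkContinuous₂ M hbound
  have hG : ∀ n, IsGalerkinProjection A (Vn n) (G n) := fun n => ⟨hGmem n, hGal n⟩
  have happrox' : ∀ v, Tendsto (fun n => infDist v (Vn n : Set V)) atTop (𝓝 0) := by
    intro v
    simp only [infDist_eq_iInf, dist_eq_norm]
    exact happrox v
  exact ⟨isCompactOperator_of_tendsto_galerkinErrorRatio (a := A) ⟨hα, hcoer⟩ hfin hG,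
    tendsto_galerkinErrorRatio_of_isCompactOperator (a := A) ⟨hα, hcoer⟩ hG happrox'⟩

/-- **Aubin–Nitsche = compactness** (Sayas; Theorem 3.3 of Ern–Guermond).
Let `ι : V → L` be a continuous embedding (injective with dense range) of complex Hilbert
spaces, let `a` be a bounded coercive sesquilinear form on `V`, let `(V_n)` be a sequence
of finite-dimensional subspaces approximating every `v ∈ V`, and let `G_n` be the Galerkin
projections: `G_n v ∈ V_n` and `a(G_n v - v, w) = 0` for all `w ∈ V_n`. Then
`sup_{v ∉ V_n} ‖ι(G_n v - v)‖_L / ‖G_n v - v‖_V → 0` iff `ι` is a compact operator. -/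
theorem aubin_nitsche_iff_compact
    {V L : Type*} [NormedAddCommGroup V] [InnerProductSpace ℂ V] [CompleteSpace V]
    [NormedAddCommGroup L] [InnerProductSpace ℂ L] [CompleteSpace L]
    (ι : V →L[ℂ] L) (hinj : Function.Injective ι) (hdense : DenseRange ι)
    (a : V → V → ℂ) (M : ℝ)
    (ha_add1 : ∀ u u' v : V, a (u + u') v = a u v + a u' v)
    (ha_smul1 : ∀ (c : ℂ) (u v : V), a (c • u) v = c * a u v)
    (ha_add2 : ∀ u v v' : V, a u (v + v') = a u v + a u v')
    (ha_smul2 : ∀ (c : ℂ) (u v : V), a u (c • v) = (starRingEnd ℂ) c * a u v)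
    (hbound : ∀ u v : V, ‖a u v‖ ≤ M * ‖u‖ * ‖v‖)
    (α : ℝ) (hα : 0 < α)
    (hcoer : ∀ v : V, α * ‖v‖ ^ 2 ≤ (a v v).re)
    (Vn : ℕ → Submodule ℂ V) (hfin : ∀ n, FiniteDimensional ℂ (Vn n))
    (happrox : ∀ v : V, Tendsto (fun n => ⨅ w : Vn n, ‖v - (w : V)‖) atTop (nhds 0))
    (G : ℕ → V → V)
    (hGmem : ∀ n (v : V), G n v ∈ Vn n)
    (hGal : ∀ n (v : V), ∀ w ∈ Vn n, a (G n v - v) w = 0) :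
    Tendsto
        (fun n => ⨆ v : {v : V // v ∉ Vn n}, ‖ι (G n (v : V) - (v : V))‖ / ‖G n (v : V) - (v : V)‖)
        atTop (nhds 0) ↔
      IsCompactOperator (⇑ι) :=
  aubin_nitsche_iff_compact_general ι a M ha_add1 ha_smul1 ha_add2 ha_smul2 hbound α hα hcoer Vn
    hfin happrox G hGmem hGal
end

section
/- Let Ω ⊆ ℝ³ be a measurable set, ℓ_D > 0, θ ∈ ℝ, and let μ̃, κ : Ω → ℂ be essentially bounded measurable functions with Re( e^{iθ} μ̃(x) ) ≥ μ_♭ > 0 and Re( e^{iθ} κ(x) ) ≥ κ_♭ > 0 for a.e. x ∈ Ω. Let C_P > 0 and let b, r ∈ L²(Ω; ℂ³) satisfy the Poincaré–Steklov inequality C_P ℓ_D⁻¹ ‖b‖_{L²} ≤ ‖r‖_{L²}. Then Re( e^{iθ} ∫_Ω ( μ̃(x) |b(x)|² + κ(x) |r(x)|² ) dx ) ≥ (1/2) κ_♭ ℓ_D⁻² min(1, C_P²) ( ‖b‖²_{L²} + ℓ_D² ‖r‖²_{L²} ). -/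
/-!
After rotation by `e^{iθ}` the `μ̃`-term of the form has nonnegative real part, so the form
dominates `κ♭ ‖r‖²`. Squaring the Poincaré–Steklov inequality gives `C_P² ‖b‖² ≤ ℓ_D² ‖r‖²`,
hence `min(1, C_P²) (‖b‖² + ℓ_D² ‖r‖²) ≤ 2 ℓ_D² ‖r‖²`, which is the claim.
-/

open MeasureTheory

lemma Complex.re_mul_mul_ofReal_add_mul_ofReal (c a k : ℂ) (s t : ℝ) :
    (c * (a * s + k * t)).re = (c * a).re * s + (c * k).re * t := by
  simp only [mul_add, ← mul_assoc, Complex.add_re, Complex.re_mul_ofReal]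

namespace MeasureTheory

variable {α E : Type*} [MeasurableSpace α] {ν : Measure α} [NormedAddCommGroup E]

lemma MemLp.integrable_mul_norm_sq {f : α → E} (hf : MemLp f 2 ν) {a : α → ℂ}
    (ha : AEStronglyMeasurable a ν) {C : ℝ} (haC : ∀ᵐ x ∂ν, ‖a x‖ ≤ C) :
    Integrable (fun x => a x * (‖f x‖ : ℂ) ^ 2) ν := by
  have hsq := ((memLp_two_iff_integrable_sq_norm hf.1).1 hf).ofReal (𝕜 := ℂ)
  push_cast at hsq
  exact hsq.bdd_mul ha haC

lemma re_mul_integral {f : α → ℂ} (hf : Integrable f ν) (c : ℂ) :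
    (c * ∫ x, f x ∂ν).re = ∫ x, (c * f x).re ∂ν := by
  rw [← integral_const_mul]
  exact (integral_re (hf.const_mul c)).symm

lemma mul_integral_norm_sq_le_re_mul_integral {f g : α → E} (hf : MemLp f 2 ν)
    (hg : MemLp g 2 ν) {a k : α → ℂ} (ha : AEStronglyMeasurable a ν)
    (hk : AEStronglyMeasurable k ν) {Ca Ck : ℝ} (haC : ∀ᵐ x ∂ν, ‖a x‖ ≤ Ca)
    (hkC : ∀ᵐ x ∂ν, ‖k x‖ ≤ Ck) {c : ℂ} {kflat : ℝ}
    (ha₀ : ∀ᵐ x ∂ν, 0 ≤ (c * a x).re) (hkflat : ∀ᵐ x ∂ν, kflat ≤ (c * k x).re) :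
    kflat * ∫ x, ‖g x‖ ^ 2 ∂ν ≤
      (c * ∫ x, (a x * (‖f x‖ : ℂ) ^ 2 + k x * (‖g x‖ : ℂ) ^ 2) ∂ν).re := by
  have hF : Integrable (fun x => a x * (‖f x‖ : ℂ) ^ 2 + k x * (‖g x‖ : ℂ) ^ 2) ν :=
    (hf.integrable_mul_norm_sq ha haC).add (hg.integrable_mul_norm_sq hk hkC)
  have hg₂ := (memLp_two_iff_integrable_sq_norm hg.1).1 hg
  rw [re_mul_integral hF, ← integral_const_mul]
  refine integral_mono_ae (hg₂.const_mul _) (hF.const_mul c).re ?_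
  filter_upwards [ha₀, hkflat] with x hax hkx
  rw [← Complex.ofReal_pow, ← Complex.ofReal_pow, Complex.re_mul_mul_ofReal_add_mul_ofReal]
  nlinarith [sq_nonneg ‖f x‖, sq_nonneg ‖g x‖]

end MeasureTheory

lemma sq_mul_le_sq_mul_of_mul_inv_mul_sqrt_le {B R ℓ C : ℝ} (hB : 0 ≤ B) (hR : 0 ≤ R)
    (hℓ : 0 < ℓ) (hC : 0 ≤ C) (h : C * ℓ⁻¹ * √B ≤ √R) : C ^ 2 * B ≤ ℓ ^ 2 * R := by
  have h₂ := pow_le_pow_left₀ (by positivity) h 2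
  rw [mul_pow, mul_pow, Real.sq_sqrt hB, Real.sq_sqrt hR, inv_pow] at h₂
  calc C ^ 2 * B = ℓ ^ 2 * (C ^ 2 * (ℓ ^ 2)⁻¹ * B) := by field_simp
    _ ≤ ℓ ^ 2 * R := by gcongr

lemma half_mul_min_mul_add_le {B R ℓ C κ : ℝ} (hB : 0 ≤ B) (hR : 0 ≤ R) (hℓ : 0 < ℓ)
    (hκ : 0 ≤ κ) (h : C ^ 2 * B ≤ ℓ ^ 2 * R) :
    1 / 2 * κ * (ℓ ^ 2)⁻¹ * min 1 (C ^ 2) * (B + ℓ ^ 2 * R) ≤ κ * R := by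
  have hmB : min 1 (C ^ 2) * B ≤ ℓ ^ 2 * R :=
    (mul_le_mul_of_nonneg_right (min_le_right _ _) hB).trans h
  have hmR : min 1 (C ^ 2) * (ℓ ^ 2 * R) ≤ ℓ ^ 2 * R :=
    mul_le_of_le_one_left (by positivity) (min_le_left _ _)
  calc 1 / 2 * κ * (ℓ ^ 2)⁻¹ * min 1 (C ^ 2) * (B + ℓ ^ 2 * R)
      = 1 / 2 * κ * (ℓ ^ 2)⁻¹ * (min 1 (C ^ 2) * B + min 1 (C ^ 2) * (ℓ ^ 2 * R)) := by ring
    _ ≤ 1 / 2 * κ * (ℓ ^ 2)⁻¹ * (2 * (ℓ ^ 2 * R)) := by gcongr; linarith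
    _ = κ * R := by field_simp

theorem improved_coercivity_poincare_steklov_general
    (Ω : Set (EuclideanSpace ℝ (Fin 3)))
    (ℓD θ μflat κflat CP : ℝ) (hℓD : 0 < ℓD) (hμflat : 0 < μflat) (hκflat : 0 < κflat)
    (hCP : 0 < CP)
    (μ κ : EuclideanSpace ℝ (Fin 3) → ℂ)
    (hμmeas : AEStronglyMeasurable μ (volume.restrict Ω))
    (hκmeas : AEStronglyMeasurable κ (volume.restrict Ω))
    (hμbdd : ∃ C : ℝ, ∀ᵐ x ∂(volume.restrict Ω), ‖μ x‖ ≤ C)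
    (hκbdd : ∃ C : ℝ, ∀ᵐ x ∂(volume.restrict Ω), ‖κ x‖ ≤ C)
    (hμ : ∀ᵐ x ∂(volume.restrict Ω), μflat ≤ (Complex.exp (θ * Complex.I) * μ x).re)
    (hκ : ∀ᵐ x ∂(volume.restrict Ω), κflat ≤ (Complex.exp (θ * Complex.I) * κ x).re)
    (b r : EuclideanSpace ℝ (Fin 3) → EuclideanSpace ℂ (Fin 3))
    (hb : MemLp b 2 (volume.restrict Ω)) (hr : MemLp r 2 (volume.restrict Ω))
    (hPS : CP * ℓD⁻¹ * Real.sqrt (∫ x in Ω, ‖b x‖ ^ 2) ≤ Real.sqrt (∫ x in Ω, ‖r x‖ ^ 2)) :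
    (1 / 2) * κflat * (ℓD ^ 2)⁻¹ * min 1 (CP ^ 2) *
        ((∫ x in Ω, ‖b x‖ ^ 2) + ℓD ^ 2 * ∫ x in Ω, ‖r x‖ ^ 2) ≤
      (Complex.exp (θ * Complex.I) *
        ∫ x in Ω, (μ x * (‖b x‖ : ℂ) ^ 2 + κ x * (‖r x‖ : ℂ) ^ 2)).re := by
  obtain ⟨Cμ, hCμ⟩ := hμbdd
  obtain ⟨Cκ, hCκ⟩ := hκbdd
  have hB : 0 ≤ ∫ x in Ω, ‖b x‖ ^ 2 := integral_nonneg fun _ => sq_nonneg _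
  have hR : 0 ≤ ∫ x in Ω, ‖r x‖ ^ 2 := integral_nonneg fun _ => sq_nonneg _
  have hμ₀ : ∀ᵐ x ∂(volume.restrict Ω), 0 ≤ (Complex.exp (θ * Complex.I) * μ x).re := by
    filter_upwards [hμ] with x hx using hμflat.le.trans hx
  calc _ ≤ κflat * ∫ x in Ω, ‖r x‖ ^ 2 :=
        half_mul_min_mul_add_le hB hR hℓD hκflat.le
          (sq_mul_le_sq_mul_of_mul_inv_mul_sqrt_le hB hR hℓD hCP.le hPS)
    _ ≤ _ := mul_integral_norm_sq_le_re_mul_integral hb hr hμmeas hκmeas hCμ hCκ hμ₀ hκ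

/-- **Improved coercivity under the Poincaré–Steklov inequality** (estimate (4.6) of
Ern–Guermond). If `Re (e^{iθ} μ̃) ≥ μ♭ > 0` and `Re (e^{iθ} κ) ≥ κ♭ > 0` a.e. on `Ω` and
`b, r ∈ L²(Ω; ℂ³)` satisfy `C_P ℓ_D⁻¹ ‖b‖ ≤ ‖r‖`, then
`Re (e^{iθ} ∫_Ω (μ̃ |b|² + κ |r|²)) ≥ ½ κ♭ ℓ_D⁻² min(1, C_P²) (‖b‖² + ℓ_D² ‖r‖²)`. -/
theorem improved_coercivity_poincare_steklov
    (Ω : Set (EuclideanSpace ℝ (Fin 3))) (hΩ : MeasurableSet Ω)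
    (ℓD θ μflat κflat CP : ℝ) (hℓD : 0 < ℓD) (hμflat : 0 < μflat) (hκflat : 0 < κflat)
    (hCP : 0 < CP)
    (μ κ : EuclideanSpace ℝ (Fin 3) → ℂ)
    (hμmeas : AEStronglyMeasurable μ (volume.restrict Ω))
    (hκmeas : AEStronglyMeasurable κ (volume.restrict Ω))
    (hμbdd : ∃ C : ℝ, ∀ᵐ x ∂(volume.restrict Ω), ‖μ x‖ ≤ C)
    (hκbdd : ∃ C : ℝ, ∀ᵐ x ∂(volume.restrict Ω), ‖κ x‖ ≤ C)
    (hμ : ∀ᵐ x ∂(volume.restrict Ω), μflat ≤ (Complex.exp (θ * Complex.I) * μ x).re)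
    (hκ : ∀ᵐ x ∂(volume.restrict Ω), κflat ≤ (Complex.exp (θ * Complex.I) * κ x).re)
    (b r : EuclideanSpace ℝ (Fin 3) → EuclideanSpace ℂ (Fin 3))
    (hb : MemLp b 2 (volume.restrict Ω)) (hr : MemLp r 2 (volume.restrict Ω))
    (hPS : CP * ℓD⁻¹ * Real.sqrt (∫ x in Ω, ‖b x‖ ^ 2) ≤ Real.sqrt (∫ x in Ω, ‖r x‖ ^ 2)) :
    (1 / 2) * κflat * (ℓD ^ 2)⁻¹ * min 1 (CP ^ 2) *
        ((∫ x in Ω, ‖b x‖ ^ 2) + ℓD ^ 2 * ∫ x in Ω, ‖r x‖ ^ 2) ≤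
      (Complex.exp (θ * Complex.I) *
        ∫ x in Ω, (μ x * (‖b x‖ : ℂ) ^ 2 + κ x * (‖r x‖ : ℂ) ^ 2)).re :=
  improved_coercivity_poincare_steklov_general Ω ℓD θ μflat κflat CP hℓD hμflat hκflat hCP μ κ
    hμmeas hκmeas hμbdd hκbdd hμ hκ b r hb hr hPS
end
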